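/- Let 1 ≤ d ≤ n be integers, H ⊂ ℝ^n a closed set, and K_0 ⊂ ℝ^n ∖ H a relatively closed countably H^d-rectifiable set. Then the class A(H,K_0) = {φ(K_0) : φ ∈ Σ(H)} is a good class in the sense of Definition of good classes; indeed D(x,r) ⊂ Σ(H) for every ball B_{x,r} ⊂ ℝ^n ∖ H. -/

import Mathlib

open MeasureTheory Metric Filter Set
open scoped ENNReal NNReal Topology RealInnerProductSpace

noncomputable section

/-- Euclidean space `ℝ^n`. -/
abbrev Euc (n : ℕ) : Type := EuclideanSpace ℝ (Fin n)

/-- A set is countably `H^d`-rectifiable if, up to an `H^d`-negligible set, it can be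
covered by countably many images of `C^1` maps from `ℝ^d`. -/
def CountablyRectifiable (d : ℕ) {n : ℕ} (K : Set (Euc n)) : Prop :=
  ∃ f : ℕ → (Euc d → Euc n), (∀ i, ContDiff ℝ 1 (f i)) ∧
    μH[(d : ℝ)] (K \ ⋃ i, Set.range (f i)) = 0

/-- A smooth diffeomorphism of `ℝ^n`. -/
def IsDiffeo {n : ℕ} (f : Euc n → Euc n) : Prop :=
  ContDiff ℝ (⊤ : ℕ∞) f ∧ ∃ g : Euc n → Euc n, ContDiff ℝ (⊤ : ℕ∞) g ∧
    Function.LeftInverse g f ∧ Function.RightInverse g f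

/-- The class `𝔇(x,r)`: maps equal to the identity outside `B(x,r)` which are smoothly
isotopic to the identity inside `B(x,r)`. -/
def IsotopyClass {n : ℕ} (x : Euc n) (r : ℝ) : Set (Euc n → Euc n) :=
  {φ | (∀ z ∉ ball x r, φ z = z) ∧
    ∃ lam : ℝ → Euc n → Euc n,
      ContDiff ℝ (⊤ : ℕ∞) (fun p : ℝ × Euc n => lam p.1 p.2) ∧
      lam 0 = id ∧ lam 1 = φ ∧
      (∀ t ∈ Icc (0 : ℝ) 1, ∀ z ∉ ball x r, lam t z = z) ∧
      (∀ t ∈ Icc (0 : ℝ) 1, IsDiffeo (lam t))}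

/-- The class `D(x,r)`: Lipschitz maps in the `C^0`-closure of `𝔇(x,r)`. -/
def DeformClass {n : ℕ} (x : Euc n) (r : ℝ) : Set (Euc n → Euc n) :=
  {φ | (∃ C : ℝ≥0, LipschitzWith C φ) ∧
    ∃ ψ : ℕ → (Euc n → Euc n), (∀ j, ψ j ∈ IsotopyClass x r) ∧
      TendstoUniformly ψ φ atTop}

/-- `K` is relatively closed in `U`. -/
def RelClosedIn {n : ℕ} (U K : Set (Euc n)) : Prop :=
  K ⊆ U ∧ ∃ F : Set (Euc n), IsClosed F ∧ K = F ∩ U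

/-- `inf { H^d(J) : J ∈ P, J ∖ cl B(x,r) = K ∖ cl B(x,r) }`. -/
def competInf (d : ℕ) {n : ℕ} (P : Set (Set (Euc n))) (K : Set (Euc n)) (x : Euc n)
    (r : ℝ) : ℝ≥0∞ :=
  sInf {m | ∃ J ∈ P, J \ closure (ball x r) = K \ closure (ball x r) ∧ m = μH[(d : ℝ)] J}

/-- A family `P` is a good class (for boundary `H`). -/
def IsGoodClass (d : ℕ) {n : ℕ} (H : Set (Euc n)) (P : Set (Set (Euc n))) : Prop :=
  ∀ K ∈ P, ∀ x ∈ K, ∀ᵐ r ∂(volume : Measure ℝ),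
    (0 < r ∧ ENNReal.ofReal r < EMetric.infEdist x H) →
      ∀ φ ∈ DeformClass x r, competInf d P K x r ≤ μH[(d : ℝ)] (φ '' K)

/-- The Plateau infimum `m₀ = inf {H^d(K) : K ∈ P}`. -/
def plateauInf (d : ℕ) {n : ℕ} (P : Set (Set (Euc n))) : ℝ≥0∞ := ⨅ K ∈ P, μH[(d : ℝ)] K

/-- A minimizing sequence: `H^d(K_j) ↓ m₀`. -/
def IsMinimizingSeq (d : ℕ) {n : ℕ} (P : Set (Set (Euc n))) (Kj : ℕ → Set (Euc n)) : Prop :=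
  (∀ j, Kj j ∈ P) ∧ Antitone (fun j => μH[(d : ℝ)] (Kj j)) ∧
    Tendsto (fun j => μH[(d : ℝ)] (Kj j)) atTop (𝓝 (plateauInf d P))

/-- The support of a measure. -/
def sptMeas {n : ℕ} (μ : Measure (Euc n)) : Set (Euc n) :=
  {x | ∀ r : ℝ, 0 < r → 0 < μ (ball x r)}

/-- Weak-* convergence of measures in the open set `U`. -/
def WeakStarOn {n : ℕ} (U : Set (Euc n)) (μs : ℕ → Measure (Euc n)) (μ : Measure (Euc n)) :
    Prop :=
  ∀ f : Euc n → ℝ, Continuous f → HasCompactSupport f → tsupport f ⊆ U →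
    Tendsto (fun j => ∫ z, f z ∂(μs j)) atTop (𝓝 (∫ z, f z ∂μ))

/-- The (multiplicity one) varifold associated to `K` is stationary in `U`: the first
variation of `H^d ⌐ K` along any compactly supported `C^1` vector field in `U` vanishes. -/
def StationaryIn (d : ℕ) {n : ℕ} (K U : Set (Euc n)) : Prop :=
  ∀ X : Euc n → Euc n, ContDiff ℝ 1 X → HasCompactSupport X → tsupport X ⊆ U →
    HasDerivAt (fun t : ℝ => (μH[(d : ℝ)] ((fun z => z + t • X z) '' K)).toReal) 0 0

/-- `S` is a `d`-dimensional real analytic submanifold of `ℝ^n`. -/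
def IsAnalyticSubmanifold (d : ℕ) {n : ℕ} (S : Set (Euc n)) : Prop :=
  ∀ x ∈ S, ∃ (U : Set (Euc n)) (V : Set (Euc d)) (f : Euc d → Euc n),
    IsOpen U ∧ x ∈ U ∧ IsOpen V ∧ AnalyticOnNhd ℝ f V ∧ Set.InjOn f V ∧
    (∀ y ∈ V, Function.Injective (fderiv ℝ f y)) ∧ f '' V = S ∩ U

/-- `ω_d`, the Lebesgue measure of the unit ball of `ℝ^d`. -/
def ballVol (d : ℕ) : ℝ≥0∞ := volume (ball (0 : Euc d) 1)

/-- The `d`-dimensional density of `μ` at `x` is `θ`. -/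
def HasDensityAt (d : ℕ) {n : ℕ} (μ : Measure (Euc n)) (x : Euc n) (θ : ℝ≥0∞) : Prop :=
  Tendsto (fun r : ℝ => μ (ball x r) / (ballVol d * ENNReal.ofReal r ^ d)) (𝓝[>] 0) (𝓝 θ)

/-- The blow-up `(K - x)/r`. -/
def blowup {n : ℕ} (x : Euc n) (r : ℝ) (K : Set (Euc n)) : Set (Euc n) :=
  (fun y => r⁻¹ • (y - x)) '' K

/-- `π` is the approximate tangent plane of `K` at `x`: `π` is a `d`-dimensional subspace and
`H^d ⌐ (K-x)/r` converges weakly-* to `H^d ⌐ π` as `r → 0⁺`. -/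
def HasApproxTangentPlane (d : ℕ) {n : ℕ} (K : Set (Euc n)) (x : Euc n) (π : Set (Euc n)) :
    Prop :=
  (∃ W : Submodule ℝ (Euc n), Module.finrank ℝ W = d ∧ π = (W : Set (Euc n))) ∧
  ∀ f : Euc n → ℝ, Continuous f → HasCompactSupport f →
    Tendsto (fun r : ℝ => ∫ z, f z ∂(μH[(d : ℝ)].restrict (blowup x r K))) (𝓝[>] 0)
      (𝓝 (∫ z, f z ∂(μH[(d : ℝ)].restrict π)))

/-- The sphere `S^m`, realized as the unit sphere of `ℝ^{m+1}`. -/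
def sph (m : ℕ) : Set (Euc (m + 1)) := sphere 0 1

/-- A smooth embedding of `S^{n-d}` into `ℝ^n ∖ H` (given by a smooth ambient map which is
injective and immersive on the sphere, with image avoiding `H`). -/
def IsEmbeddedSphere (n d : ℕ) (H : Set (Euc n)) (γ : Euc (n - d + 1) → Euc n) : Prop :=
  ContDiff ℝ (⊤ : ℕ∞) γ ∧ Set.InjOn γ (sph (n - d)) ∧
  (∀ y ∈ sph (n - d), ∀ v : Euc (n - d + 1), ⟪v, y⟫ = (0 : ℝ) → fderiv ℝ γ y v = 0 → v = 0) ∧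
  γ '' sph (n - d) ⊆ Hᶜ

/-- `γ` and `γ'` are smoothly isotopic embeddings of `S^{n-d}` in `ℝ^n ∖ H`. -/
def SphereIsotopic (n d : ℕ) (H : Set (Euc n)) (γ γ' : Euc (n - d + 1) → Euc n) : Prop :=
  ∃ Γ : ℝ → Euc (n - d + 1) → Euc n,
    ContDiff ℝ (⊤ : ℕ∞) (fun p : ℝ × Euc (n - d + 1) => Γ p.1 p.2) ∧
    Set.EqOn (Γ 0) γ (sph (n - d)) ∧ Set.EqOn (Γ 1) γ' (sph (n - d)) ∧
    ∀ t ∈ Icc (0 : ℝ) 1, IsEmbeddedSphere n d H (Γ t)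

/-- `C` is a family of smooth embeddings of `S^{n-d}` into `ℝ^n ∖ H` closed by isotopy. -/
def ClosedByIsotopy (n d : ℕ) (H : Set (Euc n)) (C : Set (Euc (n - d + 1) → Euc n)) : Prop :=
  (∀ γ ∈ C, IsEmbeddedSphere n d H γ) ∧
  ∀ γ ∈ C, ∀ γ' : Euc (n - d + 1) → Euc n,
    IsEmbeddedSphere n d H γ' → SphereIsotopic n d H γ γ' → γ' ∈ C

/-- `K` is a `C`-spanning set of `H`. -/
def IsSpanning (n d : ℕ) (C : Set (Euc (n - d + 1) → Euc n)) (K : Set (Euc n)) : Prop :=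
  ∀ γ ∈ C, (K ∩ γ '' sph (n - d)).Nonempty

/-- `F(H,C)`: the countably `H^d`-rectifiable relatively closed `C`-spanning sets of `H`. -/
def spanningClass (n d : ℕ) (H : Set (Euc n)) (C : Set (Euc (n - d + 1) → Euc n)) :
    Set (Set (Euc n)) :=
  {K | RelClosedIn Hᶜ K ∧ CountablyRectifiable d K ∧ IsSpanning n d C K}

/-- `Σ(H)`: Lipschitz maps homotopic to the identity through maps preserving `H`. -/
def SlidingMaps {n : ℕ} (H : Set (Euc n)) : Set (Euc n → Euc n) :=
  {φ | (∃ C : ℝ≥0, LipschitzWith C φ) ∧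
    ∃ Φ : ℝ → Euc n → Euc n, Continuous (fun p : ℝ × Euc n => Φ p.1 p.2) ∧
      Φ 0 = id ∧ Φ 1 = φ ∧ ∀ t ∈ Icc (0 : ℝ) 1, Φ t '' H ⊆ H}

/-- `A(H,K₀) = {φ(K₀) : φ ∈ Σ(H)}`. -/
def slidingClass {n : ℕ} (H K0 : Set (Euc n)) : Set (Set (Euc n)) :=
  {K | ∃ φ ∈ SlidingMaps H, K = φ '' K0}

/-- The cone competitor for `K` in `B(x,r)`. -/
def coneCompetitor {n : ℕ} (x : Euc n) (r : ℝ) (K : Set (Euc n)) : Set (Euc n) :=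
  (K \ ball x r) ∪
    {w | ∃ z ∈ K ∩ sphere x r, ∃ lam ∈ Icc (0 : ℝ) 1, w = lam • x + (1 - lam) • z}

/- Outside `B(x,r)` a map of `D(x,r)` is the identity, so the straight-line homotopy
`z ↦ z + t • (φ z - z)` to the identity fixes `H ⊆ ℝⁿ ∖ B(x,r)` pointwise and `φ ∈ Σ(H)`. Since
`Σ(H)` is closed under composition, `φ(ψ(K₀))` lies in `A(H,K₀)` whenever `ψ(K₀)` does, and it
agrees with `ψ(K₀)` off `cl B(x,r)`; hence it is itself a competitor and the infimum is at most
its measure, for every admissible radius. -/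

namespace IsotopyClass

variable {n : ℕ} {x : Euc n} {r : ℝ} {ψ : Euc n → Euc n}

theorem mapsTo_ball (hψ : ψ ∈ IsotopyClass x r) : MapsTo ψ (ball x r) (ball x r) := by
  obtain ⟨hfix, lam, -, -, hlam1, -, hdiffeo⟩ := hψ
  obtain ⟨-, g, -, hg, -⟩ := hlam1 ▸ hdiffeo 1 ⟨zero_le_one, le_rfl⟩
  intro z hz
  by_contra hout
  -- `ψ` fixes `ψ z`, and it is injective
  have hψz : ψ z = z := hg.injective (hfix (ψ z) hout)
  exact hout (by rwa [hψz])

end IsotopyClass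

namespace DeformClass

variable {n : ℕ} {x : Euc n} {r : ℝ} {φ : Euc n → Euc n}

theorem apply_eq_of_notMem_ball (hφ : φ ∈ DeformClass x r) {z : Euc n} (hz : z ∉ ball x r) :
    φ z = z := by
  obtain ⟨-, ψ, hψ, hconv⟩ := hφ
  have hconst : (fun j => ψ j z) = fun _ => z := funext fun j => (hψ j).1 z hz
  exact tendsto_nhds_unique (hconst ▸ hconv.tendsto_at z) tendsto_const_nhds

theorem mapsTo_closure_ball (hφ : φ ∈ DeformClass x r) :
    MapsTo φ (ball x r) (closure (ball x r)) := by
  obtain ⟨-, ψ, hψ, hconv⟩ := hφ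
  intro z hz
  exact isClosed_closure.mem_of_tendsto (hconv.tendsto_at z)
    (Eventually.of_forall fun j => subset_closure (IsotopyClass.mapsTo_ball (hψ j) hz))

theorem image_diff_closure_ball (hφ : φ ∈ DeformClass x r) (K : Set (Euc n)) :
    φ '' K \ closure (ball x r) = K \ closure (ball x r) := by
  ext w
  constructor
  · rintro ⟨⟨z, hzK, rfl⟩, hw⟩
    have hz : z ∉ ball x r := fun h => hw (mapsTo_closure_ball hφ h)
    rw [apply_eq_of_notMem_ball hφ hz] at hw ⊢
    exact ⟨hzK, hw⟩
  · rintro ⟨hwK, hw⟩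
    exact ⟨⟨w, hwK, apply_eq_of_notMem_ball hφ fun h => hw (subset_closure h)⟩, hw⟩

theorem subset_slidingMaps {H : Set (Euc n)} (hball : ball x r ⊆ Hᶜ) :
    DeformClass x r ⊆ SlidingMaps H := by
  intro φ hφ
  obtain ⟨C, hC⟩ := hφ.1
  refine ⟨⟨C, hC⟩, fun t z => z + t • (φ z - z), ?_, ?_, ?_, ?_⟩
  · have := hC.continuous
    fun_prop
  · funext z; simp
  · funext z; simp
  · rintro t - _ ⟨z, hzH, rfl⟩
    have hz : z ∉ ball x r := fun h => hball h hzH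
    simpa [apply_eq_of_notMem_ball hφ hz] using hzH

end DeformClass

theorem SlidingMaps.comp {n : ℕ} {H : Set (Euc n)} {φ ψ : Euc n → Euc n}
    (hφ : φ ∈ SlidingMaps H) (hψ : ψ ∈ SlidingMaps H) : φ ∘ ψ ∈ SlidingMaps H := by
  obtain ⟨⟨C₁, hC₁⟩, Φ, hΦ, hΦ0, hΦ1, hΦH⟩ := hφ
  obtain ⟨⟨C₂, hC₂⟩, Ψ, hΨ, hΨ0, hΨ1, hΨH⟩ := hψ
  refine ⟨⟨C₁ * C₂, hC₁.comp hC₂⟩, fun t => Φ t ∘ Ψ t, ?_, ?_, ?_, ?_⟩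
  · exact hΦ.comp (continuous_fst.prodMk hΨ)
  · simp only [hΦ0, hΨ0, Function.comp_id]
  · simp only [hΦ1, hΨ1]
  · intro t ht
    rw [image_comp]
    exact (image_mono (hΨH t ht)).trans (hΦH t ht)

theorem ball_subset_compl_of_ofReal_lt_infEDist {α : Type*} [PseudoMetricSpace α] {x : α}
    {r : ℝ} {H : Set α} (hr : ENNReal.ofReal r < Metric.infEDist x H) : ball x r ⊆ Hᶜ := by
  intro z hz hzH
  have hlt : Metric.infEDist x H < ENNReal.ofReal r :=
    (Metric.infEDist_le_edist_of_mem hzH).trans_lt (edist_lt_ofReal.2 (mem_ball'.1 hz))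
  exact hlt.not_gt hr

theorem statement3_general {n d : ℕ}
    (H : Set (Euc n))
    (K0 : Set (Euc n)) :
    IsGoodClass d H (slidingClass H K0) ∧
    ∀ (x : Euc n) (r : ℝ), ball x r ⊆ Hᶜ → DeformClass x r ⊆ SlidingMaps H := by
  refine ⟨?_, fun x r => DeformClass.subset_slidingMaps⟩
  rintro _ ⟨ψ, hψ, rfl⟩ x -
  refine Eventually.of_forall fun r hr φ hφ => sInf_le ⟨φ '' (ψ '' K0), ?_, ?_, rfl⟩
  · have hφH : φ ∈ SlidingMaps H :=
      DeformClass.subset_slidingMaps (ball_subset_compl_of_ofReal_lt_infEDist hr.2) hφ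
    exact ⟨φ ∘ ψ, SlidingMaps.comp hφH hψ, (image_comp φ ψ K0).symm⟩
  · exact DeformClass.image_diff_closure_ball hφ _

/-- **Remark 1.8.** For every relatively closed countably `H^d`-rectifiable
`K₀ ⊆ ℝ^n ∖ H`, the class `A(H,K₀)` is a good class; indeed `D(x,r) ⊆ Σ(H)` for every
ball `B(x,r) ⊆ ℝ^n ∖ H`. -/
theorem statement3 {n d : ℕ} (hd1 : 1 ≤ d) (hdn : d ≤ n)
    (H : Set (Euc n)) (hH : IsClosed H)
    (K0 : Set (Euc n)) (hK0 : RelClosedIn Hᶜ K0) (hrect : CountablyRectifiable d K0) :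
    IsGoodClass d H (slidingClass H K0) ∧
    ∀ (x : Euc n) (r : ℝ), ball x r ⊆ Hᶜ → DeformClass x r ⊆ SlidingMaps H :=
  statement3_general H K0
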